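/- Let a = n/(2π) where n ≥ 7 is an integer. For ρ ∈ (0,1) set E(ρ) = 4·(1/(1−ρ²)² − 1 − 2ρ²) and G(ρ) = 4ρ²·(1/(1−ρ²)² − 1), the coefficients of the isometric default Δ = E(ρ) dρ² + G(ρ) dφ² of the initial embedding with respect to the hyperbolic metric. Then for every ρ ∈ (0,1): E(ρ) − G(ρ)/a² > 0 and G(ρ)/(2a²) > 0. Equivalently, the coordinates of Δ in the basis (ℓ₁⊗ℓ₁, ℓ₂⊗ℓ₂, ℓ₃⊗ℓ₃), where ℓ₁ = −dρ, ℓ₂ = dρ − a·dφ, ℓ₃ = dρ + a·dφ, are all positive, i.e. Δ lies in the open positive cone spanned by the ℓᵢ⊗ℓᵢ. -/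
import Mathlib


noncomputable section

/-- For `a = n/(2π)` with `n ≥ 7`, the coordinates of the isometric default
`Δ = E(ρ) dρ² + G(ρ) dφ²` of the initial embedding in the basis
`(ℓ₁⊗ℓ₁, ℓ₂⊗ℓ₂, ℓ₃⊗ℓ₃)` are all positive: `E(ρ) − G(ρ)/a² > 0` and `G(ρ)/(2a²) > 0`
for every `ρ ∈ (0,1)`. -/
theorem stmt10 (n : ℕ) (hn : 7 ≤ n) (a : ℝ) (ha : a = (n : ℝ) / (2 * Real.pi)) :
    ∀ ρ : ℝ, 0 < ρ → ρ < 1 →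
      0 < 4 * (1 / (1 - ρ ^ 2) ^ 2 - 1 - 2 * ρ ^ 2)
            - 4 * ρ ^ 2 * (1 / (1 - ρ ^ 2) ^ 2 - 1) / a ^ 2 ∧
      0 < 4 * ρ ^ 2 * (1 / (1 - ρ ^ 2) ^ 2 - 1) / (2 * a ^ 2) := by
  have hpi : Real.pi < 3.15 := Real.pi_lt_d2
  have hn7 : (7 : ℝ) ≤ (n : ℝ) := by exact_mod_cast hn
  have ha1 : 1 < a := by
    rw [ha]
    rw [lt_div_iff₀ (by positivity)]
    nlinarith
  have ha0 : 0 < a := lt_trans one_pos ha1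
  have ha2 : 1 < a ^ 2 := by nlinarith
  intro ρ h0 h1
  have hu : 0 < 1 - ρ ^ 2 := by nlinarith
  have hu1 : (1 - ρ ^ 2) ^ 2 < 1 := by nlinarith
  have hu0 : 0 < (1 - ρ ^ 2) ^ 2 := by positivity
  have hinv : 1 < 1 / (1 - ρ ^ 2) ^ 2 := by
    rw [lt_div_iff₀ hu0]; linarith
  have hG : 0 < 4 * ρ ^ 2 * (1 / (1 - ρ ^ 2) ^ 2 - 1) := by
    have : 0 < 1 / (1 - ρ ^ 2) ^ 2 - 1 := by linarith
    positivity
  constructor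
  · have hGa : 4 * ρ ^ 2 * (1 / (1 - ρ ^ 2) ^ 2 - 1) / a ^ 2
        < 4 * ρ ^ 2 * (1 / (1 - ρ ^ 2) ^ 2 - 1) := by
      rw [div_lt_iff₀ (by positivity)]
      nlinarith
    have hEG : 0 < 4 * (1 / (1 - ρ ^ 2) ^ 2 - 1 - 2 * ρ ^ 2)
        - 4 * ρ ^ 2 * (1 / (1 - ρ ^ 2) ^ 2 - 1) := by
      have h1u : 1 / (1 - ρ ^ 2) ^ 2 = 1 / (1 - ρ ^ 2) ^ 2 := rfl
      have key : (4 * (1 / (1 - ρ ^ 2) ^ 2 - 1 - 2 * ρ ^ 2)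
          - 4 * ρ ^ 2 * (1 / (1 - ρ ^ 2) ^ 2 - 1)) * (1 - ρ ^ 2) ^ 2
          = 4 * ρ ^ 4 * (1 - ρ ^ 2) := by
        field_simp
        ring
      nlinarith [mul_pos (mul_pos (by positivity : (0:ℝ) < 4 * ρ ^ 4) hu)
        (by positivity : (0:ℝ) < 1 / (1 - ρ ^ 2) ^ 2)]
    linarith
  · positivity
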